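/- Let s be an even positive integer that is the least even number whose base-3/2 representation has exactly n digits. Then the least even number whose base-3/2 representation has exactly n+1 digits equals 2·⌈3s/4⌉. -/
import Mathlib

def digits : ℕ → List ℕ
  | 0 => []
  | n + 1 => digits (2 * ((n + 1) / 3)) ++ [(n + 1) % 3]
decreasing_by omega

def val (L : List ℕ) : ℚ := L.foldl (fun acc d => 3/2 * acc + d) 0

lemma digits_pos (m : ℕ) (hm : 0 < m) :
    digits m = digits (2 * (m / 3)) ++ [m % 3] := by
  cases m with
  | zero => omega
  | succ n => rw [digits]

theorem smallest_even_rec (n s t : ℕ) (hn : 1 ≤ n)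
    (hs : IsLeast {m : ℕ | Even m ∧ 0 < m ∧ (digits m).length = n} s)
    (ht : IsLeast {m : ℕ | Even m ∧ 0 < m ∧ (digits m).length = n + 1} t) :
    (t : ℤ) = 2 * ⌈(3 * (s : ℚ)) / 4⌉ := by
  obtain ⟨⟨hse, hsp, hsl⟩, hsmin⟩ := hs
  obtain ⟨⟨hte, htp, htl⟩, htmin⟩ := ht
  obtain ⟨k, hk⟩ := hse
  obtain ⟨r, hr⟩ := hte
  -- lower bound: t ≥ 3k
  have hdt := digits_pos t htp
  have hlen : (digits (2 * (t / 3))).length = n := by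
    have := congrArg List.length hdt
    simp at this; omega
  have hpos2 : 0 < 2 * (t / 3) := by
    by_contra h
    have h0 : 2 * (t / 3) = 0 := by omega
    rw [h0] at hlen
    simp [digits] at hlen; omega
  have h1 : s ≤ 2 * (t / 3) := hsmin ⟨⟨t / 3, by omega⟩, hpos2, hlen⟩
  have h2 : 3 * k ≤ t := by omega
  -- candidate c
  set c : ℕ := 3 * k + k % 2 with hc
  have hc3 : 2 * (c / 3) = s := by omega
  have hcmem : Even c ∧ 0 < c ∧ (digits c).length = n + 1 := by
    refine ⟨⟨c / 2, by omega⟩, by omega, ?_⟩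
    rw [digits_pos c (by omega), hc3]
    simp [hsl]
  have h3 : t ≤ c := htmin hcmem
  have h4 : t = c := by omega
  -- ceiling arithmetic
  rcases Nat.even_or_odd k with ⟨j, hj⟩ | ⟨j, hj⟩
  · have hs4 : s = 4 * j := by omega
    have hceil : ⌈(3 * (s : ℚ)) / 4⌉ = 3 * j := by
      rw [hs4]
      rw [Int.ceil_eq_iff]
      constructor <;> · push_cast; linarith
    rw [hceil]; omega
  · have hs4 : s = 4 * j + 2 := by omega
    have hceil : ⌈(3 * (s : ℚ)) / 4⌉ = 3 * j + 2 := by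
      rw [hs4]
      rw [Int.ceil_eq_iff]
      constructor <;> · push_cast; linarith
    rw [hceil]; omega
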